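/- Comparison of exponents in dimension 2: define β*(p,w) = (3w−13)/(6w−20) − (9w−40)/((6w−20)p) and β**(p,w) = (1/(2p))·((3p²−2p−20)w − 23p² + 82p − 40)/((10+3p)w − 23p + 10). Then for all real p, w with 10/3 < p < w and w > 6, one has β**(p,w) < β*(p,w) if and only if w > 23/3. -/

import Mathlib

noncomputable def βstar (p w : ℝ) : ℝ :=
  (3*w - 13)/(6*w - 20) - (9*w - 40)/((6*w - 20)*p)

noncomputable def βstarstar (p w : ℝ) : ℝ :=
  (1/(2*p)) * ((3*p^2 - 2*p - 20)*w - 23*p^2 + 82*p - 40) / ((10 + 3*p)*w - 23*p + 10)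

theorem βstar_sub_βstarstar {p w : ℝ} (hp : p ≠ 0) (hw : 6*w - 20 ≠ 0)
    (hD : (10 + 3*p)*w - 23*p + 10 ≠ 0) :
    βstar p w - βstarstar p w =
      (3*p - 10) * (3*w - 23) * (w - p) / ((6*w - 20) * p * ((10 + 3*p)*w - 23*p + 10)) := by
  rw [βstar, βstarstar, div_sub_div _ _ hw (mul_ne_zero hw hp), one_div, inv_mul_eq_div, div_div,
    div_sub_div _ _ (by positivity) (by positivity), div_eq_div_iff (by positivity) (by positivity)]
  ring

/-- Bounded below by its value `(3p - 10)(p - 1)` at `w = p`. -/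
theorem βstarstar_denom_pos {p w : ℝ} (hp : 10/3 < p) (hpw : p < w) :
    0 < (10 + 3*p)*w - 23*p + 10 := by
  nlinarith [mul_pos (by linarith : (0:ℝ) < 3*p - 10) (by linarith : (0:ℝ) < p - 1),
    mul_pos (by linarith : (0:ℝ) < 10 + 3*p) (sub_pos.2 hpw)]

theorem stmt10_general (p w : ℝ) (h1 : 10/3 < p) (h2 : p < w) :
    βstarstar p w < βstar p w ↔ 23/3 < w := by
  have hp : 0 < p := by linarith
  have hw : 0 < 6*w - 20 := by linarith
  have hD := βstarstar_denom_pos h1 h2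
  have hpos : 0 < (3*p - 10) * (w - p) := mul_pos (by linarith) (by linarith)
  rw [← sub_pos, βstar_sub_βstarstar hp.ne' hw.ne' hD.ne', div_pos_iff_of_pos_right (by positivity),
    mul_right_comm, mul_pos_iff_of_pos_left hpos]
  constructor <;> intro h <;> linarith

theorem stmt10 (p w : ℝ) (h1 : 10/3 < p) (h2 : p < w) (h3 : 6 < w) :
    βstarstar p w < βstar p w ↔ 23/3 < w :=
  stmt10_general p w h1 h2
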